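/- For p > 1 and odd j ≥ 1, the j-th sine Fourier coefficient of s_p(x) = sin_p(π_p x) satisfies ŝ_p(j) = (4/(jπ))·∫₀¹ cos((jπ/π_p)·F_p(t)) dt, and ŝ_p(j) = 0 for even j. -/

import Mathlib

open Real

noncomputable def pip (p : ℝ) : ℝ := 2 * π / (p * Real.sin (π / p))

noncomputable def Fp (p y : ℝ) : ℝ :=
  ∫ t in (0:ℝ)..y, (1 - t ^ p) ^ (-1 / p)

/-!
Since `s (1 - x) = s x` and `sin (jπ(1 - x)) = -(-1)^j sin (jπx)`, reflecting `[1/2, 1]` onto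
`[0, 1/2]` shows that the coefficient vanishes for even `j` and is `4 ∫₀^{1/2} s x sin (jπx) dx`
for odd `j`. On `[0, 1/2]`, `s` inverts the increasing map `y ↦ F_p(y) / π_p`, where
`F_p(1) = π_p / 2` because the substitution `t = y^(1/p)` turns `F_p(1)` into the Beta integral
`B(1/p, 1 - 1/p) / p = π / (p sin (π/p))`. Integrating by parts and substituting `t = s x` gives
`∫₀^{1/2} s x sin (ωx) dx = (∫₀¹ cos (ω F_p(t) / π_p) dt - cos (ω/2)) / ω`,
and `cos (jπ/2) = 0` for odd `j`.
-/

open MeasureTheory Set intervalIntegral Topology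

section Beta

noncomputable def betaIntegrand (a b x : ℝ) : ℝ := x ^ (a - 1) * (1 - x) ^ (b - 1)

theorem ofReal_betaIntegrand {a b x : ℝ} (hx : x ∈ Icc 0 1) :
    (betaIntegrand a b x : ℂ) = (x : ℂ) ^ ((a : ℂ) - 1) * (1 - (x : ℂ)) ^ ((b : ℂ) - 1) := by
  rw [betaIntegrand, Complex.ofReal_mul, Complex.ofReal_cpow hx.1,
    Complex.ofReal_cpow (sub_nonneg.2 hx.2)]
  push_cast
  rfl

theorem integrableOn_betaIntegrand {a b : ℝ} (ha : 0 < a) (hb : 0 < b) :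
    IntegrableOn (betaIntegrand a b) (Ioo 0 1) := by
  have hC := Complex.betaIntegral_convergent (u := a) (v := b) (by simpa) (by simpa)
  rw [intervalIntegrable_iff_integrableOn_Ioc_of_le zero_le_one] at hC
  refine IntegrableOn.congr_fun (hC.mono_set Ioo_subset_Ioc_self).re (fun x hx ↦ ?_)
    measurableSet_Ioo
  simp only [← ofReal_betaIntegrand (Ioo_subset_Icc_self hx), RCLike.re_to_complex,
    Complex.ofReal_re]

theorem setIntegral_betaIntegrand {a b : ℝ} (ha : 0 < a) (hb : 0 < b) :
    ∫ x in Ioo 0 1, betaIntegrand a b x = ProbabilityTheory.beta a b := by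
  have hC := Complex.betaIntegral_convergent (u := a) (v := b) (by simpa) (by simpa)
  rw [intervalIntegrable_iff_integrableOn_Ioc_of_le zero_le_one] at hC
  rw [ProbabilityTheory.beta_eq_betaIntegralReal a b ha hb, Complex.betaIntegral,
    intervalIntegral.integral_of_le zero_le_one, integral_Ioc_eq_integral_Ioo,
    ← RCLike.re_to_complex, ← integral_re (hC.mono_set Ioo_subset_Ioc_self)]
  refine setIntegral_congr_fun measurableSet_Ioo fun x hx ↦ ?_
  simp only [← ofReal_betaIntegrand (Ioo_subset_Icc_self hx), RCLike.re_to_complex,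
    Complex.ofReal_re]

end Beta

section SubstitutionRpow

variable {E : Type*} [NormedAddCommGroup E] [NormedSpace ℝ E]

theorem indicator_Iio_one_comp_rpow {p x : ℝ} (hp : 0 < p) (hx : x ∈ Ioi 0) (g : ℝ → E) :
    (|p| * x ^ (p - 1)) • (Iio 1).indicator g (x ^ p) =
      (Iio 1).indicator (fun x ↦ (p * x ^ (p - 1)) • g (x ^ p)) x := by
  have hlt : x ^ p < 1 ↔ x < 1 := by
    simpa using Real.rpow_lt_rpow_iff (z := p) (le_of_lt hx) zero_le_one hp
  by_cases h : x < 1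
  · simp [h, hlt.2 h, abs_of_pos hp]
  · simp [h, mt hlt.1 h]

theorem setIntegral_Ioo_comp_rpow {p : ℝ} (hp : 0 < p) (g : ℝ → E) :
    ∫ x in Ioo 0 1, (p * x ^ (p - 1)) • g (x ^ p) = ∫ y in Ioo 0 1, g y := by
  simp only [← Ioi_inter_Iio, ← setIntegral_indicator measurableSet_Iio]
  rw [← integral_comp_rpow_Ioi ((Iio 1).indicator g) hp.ne']
  exact setIntegral_congr_fun measurableSet_Ioi
    fun x hx ↦ (indicator_Iio_one_comp_rpow hp hx g).symm

theorem integrableOn_Ioo_comp_rpow_iff {p : ℝ} (hp : 0 < p) (g : ℝ → E) :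
    IntegrableOn (fun x ↦ (p * x ^ (p - 1)) • g (x ^ p)) (Ioo 0 1) ↔
      IntegrableOn g (Ioo 0 1) := by
  simp only [← Iio_inter_Ioi, ← integrableOn_indicator_iff measurableSet_Iio]
  rw [← integrableOn_Ioi_comp_rpow_iff ((Iio 1).indicator g) hp.ne']
  exact integrableOn_congr_fun (fun x hx ↦ (indicator_Iio_one_comp_rpow hp hx g).symm)
    measurableSet_Ioi

end SubstitutionRpow

theorem hasDerivAt_integral_of_continuousOn_Ioo {f : ℝ → ℝ} {a b x : ℝ}
    (hint : IntervalIntegrable f volume a b) (hcont : ContinuousOn f (Ioo a b))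
    (hx : x ∈ Ioo a b) : HasDerivAt (fun u ↦ ∫ t in a..u, f t) (f x) x :=
  integral_hasDerivAt_right
    (hint.mono_set (uIcc_subset_uIcc_left (Icc_subset_uIcc (Ioo_subset_Icc_self hx))))
    (ContinuousAt.stronglyMeasurableAtFilter isOpen_Ioo
      (fun _ hy ↦ hcont.continuousAt (Ioo_mem_nhds hy.1 hy.2)) x hx)
    (hcont.continuousAt (Ioo_mem_nhds hx.1 hx.2))

theorem StrictMonoOn.continuousOn_Icc_of_surjOn {f : ℝ → ℝ} {a b : ℝ}
    (hf : StrictMonoOn f (Icc a b)) (hsurj : SurjOn f (Icc a b) (Icc (f a) (f b))) :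
    ContinuousOn f (Icc a b) := by
  intro x hx
  have ha : a ∈ Icc a b := ⟨le_rfl, hx.1.trans hx.2⟩
  have hb : b ∈ Icc a b := ⟨hx.1.trans hx.2, le_rfl⟩
  have hright : ContinuousWithinAt f (Icc a b ∩ Ici x) x := by
    rcases hx.2.eq_or_lt with rfl | hxb
    · exact continuousWithinAt_singleton.mono fun y hy ↦ le_antisymm hy.1.2 hy.2
    · have himage : Icc (f a) (f b) ∈ 𝓝[≥] f x :=
        Icc_mem_nhdsGE_of_mem ⟨hf.monotoneOn ha hx hx.1, hf hx hb hxb⟩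
      exact (hf.continuousWithinAt_right_of_image_mem_nhdsWithin
        (Icc_mem_nhdsGE_of_mem ⟨hx.1, hxb⟩) (Filter.mem_of_superset himage hsurj)).mono
        inter_subset_right
  have hleft : ContinuousWithinAt f (Icc a b ∩ Iic x) x := by
    rcases hx.1.eq_or_lt with rfl | hax
    · exact continuousWithinAt_singleton.mono fun y hy ↦ le_antisymm hy.2 hy.1.1
    · have himage : Icc (f a) (f b) ∈ 𝓝[≤] f x :=
        Icc_mem_nhdsLE_of_mem ⟨hf ha hx hax, hf.monotoneOn hx hb hx.2⟩
      exact (hf.continuousWithinAt_left_of_image_mem_nhdsWithin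
        (Icc_mem_nhdsLE_of_mem ⟨hax, hx.2⟩) (Filter.mem_of_superset himage hsurj)).mono
        inter_subset_right
  refine (hleft.union hright).mono fun y hy ↦ ?_
  rcases le_total y x with h | h
  exacts [Or.inl ⟨hy, h⟩, Or.inr ⟨hy, h⟩]

theorem integral_zero_one_eq_of_comp_one_sub {f : ℝ → ℝ} {ε : ℝ}
    (hf : ∀ x, f (1 - x) = ε * f x) (hint : IntervalIntegrable f volume 0 (1 / 2)) :
    ∫ x in 0..1, f x = (1 + ε) * ∫ x in 0..1 / 2, f x := by
  have hint' : IntervalIntegrable f volume (1 / 2) 1 := by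
    have h := (hint.comp_sub_left 1).symm.const_mul ε
    norm_num only [sub_zero] at h
    convert h using 2 with x
    rw [← hf, sub_sub_cancel]
  have hright : ∫ x in 1 / 2..1, f x = ε * ∫ x in 0..1 / 2, f x := by
    rw [← intervalIntegral.integral_const_mul]
    simp only [← hf, intervalIntegral.integral_comp_sub_left]
    norm_num
  rw [← integral_add_adjacent_intervals hint hint', hright]
  ring

namespace Fp

variable {p : ℝ}

theorem eqOn_integrand_comp_rpow (hp : 0 < p) :
    EqOn (fun t : ℝ ↦ (1 - t ^ p) ^ (-1 / p))
      (fun t ↦ (p * t ^ (p - 1)) • (p⁻¹ • betaIntegrand p⁻¹ (1 - p⁻¹)) (t ^ p)) (Ioo 0 1) := by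
  intro t ht
  have hpow : t ^ (p - 1) * (t ^ p) ^ (p⁻¹ - 1) = 1 := by
    rw [← rpow_mul ht.1.le, ← rpow_add ht.1, mul_sub, mul_inv_cancel₀ hp.ne']
    simp
  simp only [Pi.smul_apply, smul_eq_mul, betaIntegrand]
  rw [show (1 - p⁻¹) - 1 = -1 / p by ring, show ∀ a b c d : ℝ, a * b * (p⁻¹ * (c * d)) =
    a * p⁻¹ * (b * c) * d by intros; ring, hpow, mul_inv_cancel₀ hp.ne', one_mul, one_mul]

theorem integrableOn_integrand (hp : 1 < p) :
    IntegrableOn (fun t : ℝ ↦ (1 - t ^ p) ^ (-1 / p)) (Ioo 0 1) := by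
  have hp0 : 0 < p := one_pos.trans hp
  refine IntegrableOn.congr_fun ?_ (eqOn_integrand_comp_rpow hp0).symm measurableSet_Ioo
  exact (integrableOn_Ioo_comp_rpow_iff hp0 _).2
    ((integrableOn_betaIntegrand (inv_pos.2 hp0) (sub_pos.2 (inv_lt_one_of_one_lt₀ hp))).smul p⁻¹)

theorem integrand_pos (hp : 0 < p) {t : ℝ} (ht : t ∈ Ioo 0 1) : 0 < (1 - t ^ p) ^ (-1 / p) :=
  rpow_pos_of_pos (sub_pos.2 (rpow_lt_one ht.1.le ht.2 hp)) _

theorem continuousOn_integrand (hp : 0 < p) :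
    ContinuousOn (fun t : ℝ ↦ (1 - t ^ p) ^ (-1 / p)) (Ioo 0 1) := fun t ht ↦
  ((continuousAt_const.sub (continuousAt_rpow_const t p (Or.inr hp.le))).rpow_const
    (Or.inl (sub_pos.2 (rpow_lt_one ht.1.le ht.2 hp)).ne')).continuousWithinAt

theorem intervalIntegrable_integrand (hp : 1 < p) :
    IntervalIntegrable (fun t : ℝ ↦ (1 - t ^ p) ^ (-1 / p)) volume 0 1 :=
  (intervalIntegrable_iff_integrableOn_Ioo_of_le zero_le_one).2 (integrableOn_integrand hp)

theorem continuousOn (hp : 1 < p) : ContinuousOn (Fp p) (Icc 0 1) := by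
  rw [← uIcc_of_le zero_le_one]
  exact continuousOn_primitive_interval' (intervalIntegrable_integrand hp) left_mem_uIcc

theorem hasDerivAt (hp : 1 < p) {t : ℝ} (ht : t ∈ Ioo 0 1) :
    HasDerivAt (Fp p) ((1 - t ^ p) ^ (-1 / p)) t :=
  hasDerivAt_integral_of_continuousOn_Ioo (intervalIntegrable_integrand hp)
    (continuousOn_integrand (one_pos.trans hp)) ht

theorem strictMonoOn (hp : 1 < p) : StrictMonoOn (Fp p) (Icc 0 1) :=
  strictMonoOn_of_deriv_pos (convex_Icc 0 1) (continuousOn hp) fun t ht ↦ by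
    rw [interior_Icc] at ht
    rw [(hasDerivAt hp ht).deriv]
    exact integrand_pos (one_pos.trans hp) ht

end Fp

section

variable {p : ℝ}

theorem pip_pos (hp : 1 < p) : 0 < pip p := by
  have hp0 : 0 < p := one_pos.trans hp
  have := sin_pos_of_pos_of_lt_pi (div_pos pi_pos hp0) (div_lt_self pi_pos hp)
  unfold pip
  positivity

theorem Fp_zero : Fp p 0 = 0 := integral_same

theorem Fp_one (hp : 1 < p) : Fp p 1 = pip p / 2 := by
  have hp0 : 0 < p := one_pos.trans hp
  rw [Fp, integral_of_le zero_le_one, integral_Ioc_eq_integral_Ioo,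
    setIntegral_congr_fun measurableSet_Ioo (Fp.eqOn_integrand_comp_rpow hp0),
    setIntegral_Ioo_comp_rpow hp0]
  simp only [Pi.smul_apply, smul_eq_mul]
  rw [MeasureTheory.integral_const_mul, setIntegral_betaIntegrand (inv_pos.2 hp0)
    (sub_pos.2 (inv_lt_one_of_one_lt₀ hp)), ProbabilityTheory.beta, add_sub_cancel, Gamma_one,
    div_one, Gamma_mul_Gamma_one_sub, pip]
  field_simp

theorem continuousOn_cos_mul_Fp (hp : 1 < p) (c : ℝ) :
    ContinuousOn (fun t ↦ cos (c * Fp p t)) (Icc 0 1) :=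
  continuous_cos.comp_continuousOn ((Fp.continuousOn hp).const_smul c)

end

/-- On `[0, 1/2]`, `s x = sin_p (π_p x)`, i.e. `s` inverts `y ↦ F_p(y) / π_p` there. -/
def IsScaledSinpOnHalf (p : ℝ) (s : ℝ → ℝ) : Prop :=
  ∀ x ∈ Icc (0 : ℝ) (1 / 2), s x ∈ Icc (0 : ℝ) 1 ∧ Fp p (s x) = pip p * x

namespace IsScaledSinpOnHalf

variable {p : ℝ} {s : ℝ → ℝ}

theorem map_zero (hs : IsScaledSinpOnHalf p s) (hp : 1 < p) : s 0 = 0 := by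
  have h0 : (0 : ℝ) ∈ Icc 0 (1 / 2) := by norm_num
  refine (Fp.strictMonoOn hp).injOn (hs 0 h0).1 (left_mem_Icc.2 zero_le_one) ?_
  rw [(hs 0 h0).2, Fp_zero, mul_zero]

theorem map_half (hs : IsScaledSinpOnHalf p s) (hp : 1 < p) : s (1 / 2) = 1 := by
  have h : (1 / 2 : ℝ) ∈ Icc 0 (1 / 2) := by norm_num
  refine (Fp.strictMonoOn hp).injOn (hs _ h).1 (right_mem_Icc.2 zero_le_one) ?_
  rw [(hs _ h).2, Fp_one hp]
  ring

theorem strictMonoOn (hs : IsScaledSinpOnHalf p s) (hp : 1 < p) :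
    StrictMonoOn s (Icc 0 (1 / 2)) := fun x hx y hy hxy ↦ by
  rw [← (Fp.strictMonoOn hp).lt_iff_lt (hs x hx).1 (hs y hy).1, (hs x hx).2, (hs y hy).2]
  exact mul_lt_mul_of_pos_left hxy (pip_pos hp)

theorem surjOn (hs : IsScaledSinpOnHalf p s) (hp : 1 < p) :
    SurjOn s (Icc 0 (1 / 2)) (Icc 0 1) := fun y hy ↦ by
  have hFy : Fp p y / pip p ∈ Icc (0 : ℝ) (1 / 2) := by
    have h0 := (Fp.strictMonoOn hp).monotoneOn (left_mem_Icc.2 zero_le_one) hy hy.1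
    have h1 := (Fp.strictMonoOn hp).monotoneOn hy (right_mem_Icc.2 zero_le_one) hy.2
    rw [Fp_zero] at h0
    rw [Fp_one hp] at h1
    constructor
    · exact div_nonneg h0 (pip_pos hp).le
    · rw [div_le_iff₀ (pip_pos hp)]
      linarith
  refine ⟨_, hFy, (Fp.strictMonoOn hp).injOn (hs _ hFy).1 hy ?_⟩
  rw [(hs _ hFy).2, mul_div_cancel₀ _ (pip_pos hp).ne']

theorem continuousOn (hs : IsScaledSinpOnHalf p s) (hp : 1 < p) :
    ContinuousOn s (Icc 0 (1 / 2)) :=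
  (hs.strictMonoOn hp).continuousOn_Icc_of_surjOn (by
    rw [hs.map_zero hp, hs.map_half hp]
    exact hs.surjOn hp)

theorem mapsTo_Ioo (hs : IsScaledSinpOnHalf p s) (hp : 1 < p) :
    MapsTo s (Ioo 0 (1 / 2)) (Ioo 0 1) := fun x hx ↦ by
  have h0 : (0 : ℝ) ∈ Icc 0 (1 / 2) := by norm_num
  have h : (1 / 2 : ℝ) ∈ Icc 0 (1 / 2) := by norm_num
  rw [← hs.map_zero hp, ← hs.map_half hp]
  exact ⟨hs.strictMonoOn hp h0 (Ioo_subset_Icc_self hx) hx.1,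
    hs.strictMonoOn hp (Ioo_subset_Icc_self hx) h hx.2⟩

theorem hasDerivAt (hs : IsScaledSinpOnHalf p s) (hp : 1 < p) {x : ℝ} (hx : x ∈ Ioo 0 (1 / 2)) :
    HasDerivAt s (pip p / (1 - s x ^ p) ^ (-1 / p)) x := by
  have hsx := hs.mapsTo_Ioo hp hx
  rw [← inv_div]
  refine HasDerivAt.of_local_left_inverse
    ((hs.continuousOn hp).continuousAt (Icc_mem_nhds hx.1 hx.2))
    ((Fp.hasDerivAt hp hsx).div_const (pip p))
    (div_ne_zero (Fp.integrand_pos (one_pos.trans hp) hsx).ne' (pip_pos hp).ne') ?_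
  filter_upwards [Ioo_mem_nhds hx.1 hx.2] with y hy
  rw [(hs y (Ioo_subset_Icc_self hy)).2, mul_div_cancel_left₀ _ (pip_pos hp).ne']

theorem intervalIntegrable_mul_sin (hs : IsScaledSinpOnHalf p s) (hp : 1 < p) (ω : ℝ) :
    IntervalIntegrable (fun x ↦ s x * sin (ω * x)) volume 0 (1 / 2) := by
  refine ContinuousOn.intervalIntegrable ?_
  rw [uIcc_of_le (by norm_num)]
  exact (hs.continuousOn hp).mul (by fun_prop)

theorem hasDerivAt_antiderivative_mul_sin (hs : IsScaledSinpOnHalf p s) (hp : 1 < p) {ω : ℝ}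
    (hω : ω ≠ 0) {x : ℝ} (hx : x ∈ Ioo 0 (1 / 2)) :
    HasDerivAt (fun x ↦ ((∫ t in 0..s x, cos (ω / pip p * Fp p t)) - s x * cos (ω * x)) / ω)
      (s x * sin (ω * x)) x := by
  have hsx := hs.mapsTo_Ioo hp hx
  have hcont := continuousOn_cos_mul_Fp hp (ω / pip p)
  have hK := (hasDerivAt_integral_of_continuousOn_Ioo
    (hcont.intervalIntegrable_of_Icc zero_le_one) (hcont.mono Ioo_subset_Icc_self) hsx).comp x
    (hs.hasDerivAt hp hx)
  rw [(hs x (Ioo_subset_Icc_self hx)).2,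
    show ω / pip p * (pip p * x) = ω * x by field_simp [(pip_pos hp).ne']] at hK
  have hcos := ((hasDerivAt_id' x).const_mul ω).cos
  refine ((hK.sub ((hs.hasDerivAt hp hx).mul hcos)).div_const ω).congr_deriv ?_
  field_simp
  ring

theorem integral_mul_sin (hs : IsScaledSinpOnHalf p s) (hp : 1 < p) {ω : ℝ} (hω : ω ≠ 0) :
    ∫ x in 0..1 / 2, s x * sin (ω * x) =
      ((∫ t in 0..1, cos (ω / pip p * Fp p t)) - cos (ω / 2)) / ω := by
  have hcont := continuousOn_cos_mul_Fp hp (ω / pip p)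
  have hK : ContinuousOn (fun y ↦ ∫ t in 0..y, cos (ω / pip p * Fp p t)) (Icc 0 1) := by
    rw [← uIcc_of_le zero_le_one]
    exact continuousOn_primitive_interval' (hcont.intervalIntegrable_of_Icc zero_le_one)
      left_mem_uIcc
  have hG : ContinuousOn
      (fun x ↦ ((∫ t in 0..s x, cos (ω / pip p * Fp p t)) - s x * cos (ω * x)) / ω)
      (Icc 0 (1 / 2)) :=
    ((hK.comp (hs.continuousOn hp) fun x hx ↦ (hs x hx).1).sub
      ((hs.continuousOn hp).mul (by fun_prop))).div_const ω
  rw [integral_eq_sub_of_hasDerivAt_of_le (by norm_num) hG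
    (fun x hx ↦ hs.hasDerivAt_antiderivative_mul_sin hp hω hx)
    (hs.intervalIntegrable_mul_sin hp ω),
    hs.map_zero hp, hs.map_half hp]
  simp only [integral_same, mul_zero, zero_mul, sub_zero, zero_div, one_mul]
  ring_nf

end IsScaledSinpOnHalf

theorem stmt_14_general (p : ℝ) (hp : 1 < p) (s : ℝ → ℝ)
    (hinv : ∀ x ∈ Set.Icc (0:ℝ) (1/2), s x ∈ Set.Icc (0:ℝ) 1 ∧ Fp p (s x) = pip p * x)
    (heven : ∀ x, s (1 - x) = s x)
    (j : ℕ) :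
    (2 * ∫ x in (0:ℝ)..1, s x * Real.sin (j * π * x)) =
      if Even j then 0
      else (4 / (j * π)) * ∫ t in (0:ℝ)..1, Real.cos ((j * π / pip p) * Fp p t) := by
  have hs : IsScaledSinpOnHalf p s := hinv
  have hreflect : ∀ x, s (1 - x) * sin (j * π * (1 - x)) = -(-1) ^ j * (s x * sin (j * π * x)) :=
    fun x ↦ by rw [heven, mul_one_sub, sin_nat_mul_pi_sub]; ring
  rw [integral_zero_one_eq_of_comp_one_sub hreflect (hs.intervalIntegrable_mul_sin hp _)]
  rcases Nat.even_or_odd j with hj | ⟨m, rfl⟩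
  · rw [if_pos hj, hj.neg_one_pow]
    ring
  · have hcos : cos ((2 * m + 1 : ℕ) * π / 2) = 0 := cos_eq_zero_iff.2 ⟨m, by push_cast; ring⟩
    have hodd := odd_two_mul_add_one m
    rw [if_neg (Nat.not_even_iff_odd.2 hodd), hodd.neg_one_pow,
      hs.integral_mul_sin hp (by positivity), hcos]
    ring

theorem stmt_14 (p : ℝ) (hp : 1 < p) (s : ℝ → ℝ)
    (hinv : ∀ x ∈ Set.Icc (0:ℝ) (1/2), s x ∈ Set.Icc (0:ℝ) 1 ∧ Fp p (s x) = pip p * x)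
    (hodd : ∀ x, s (-x) = -s x)
    (heven : ∀ x, s (1 - x) = s x)
    (hper : ∀ x, s (x + 2) = s x)
    (j : ℕ) :
    (2 * ∫ x in (0:ℝ)..1, s x * Real.sin (j * π * x)) =
      if Even j then 0
      else (4 / (j * π)) * ∫ t in (0:ℝ)..1, Real.cos ((j * π / pip p) * Fp p t) :=
  stmt_14_general p hp s hinv heven j
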